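/- Let c : ℝ → ℂ be a scalar cosine family, i.e. c(0) = 1 and c(t+s) + c(t−s) = 2·c(t)·c(s) for all s, t ∈ ℝ. Then limsup_{t→0} |c(t) − 1|, computed in the extended nonnegative reals, belongs to the set {0, 2, +∞}. Moreover, if limsup_{t→0} |c(t) − 1| = 0, then there exists a ∈ ℂ such that c(t) = cos(a·t) for all t ∈ ℝ. -/

import Mathlib

/-!
Suppose `‖c t - 1‖ ≤ l < 2` near `0` and let `E` be the set of cluster values of `c` at `0`.
Iterating `2 c(t)² = c(2t) + 1` shows `‖c‖ ≤ 1 + ε` near `0`, so `E` lies in the unit disc; the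
same estimate gives `limsup ‖c t - 1‖ ≤ 2` whenever this limsup is finite. Since
`c (n t) = Tₙ (c t)` for the Chebyshev polynomials `Tₙ`, every `Tₙ` maps `E` into itself, and
onto itself when `n ≠ 0`. As `‖cos (n ζ)‖ ≥ n |Im ζ|`, this forces `E ⊆ cos ℝ`. The identities
`c(t+s) + c(t-s) = 2 c(t) c(s)` and `c(t+s) c(t-s) = c(t)² + c(s)² - 1` make the angles `θ`
with `cos θ ∈ E` an additive subgroup of `ℝ`. It cannot be dense, as `cos π = -1` is not within
`l` of `1`. So it is cyclic, say `ℤ g` with `2π = m g`, and every `p ∈ E` equals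
`T_m (cos (j g)) = cos (2π j) = 1`. Hence `c → 1` at `0`.

A cosine family with `c → 1` at `0` is continuous. Take `z₀` small with `cos z₀ = c s` (by the
open mapping theorem for `cos` at `0`). The half-angle relation then gives
`cos (z₀ / 2ⁿ) = c (s / 2ⁿ)`, so `c` and `t ↦ cos (z₀ t / s)` agree on the dense set of dyadic
multiples of `s`.
-/

open Filter Topology Polynomial.Chebyshev Complex
open scoped Real ENNReal

theorem eq_or_eq_of_add_eq_add_of_mul_eq_mul {R : Type*} [CommRing R] [NoZeroDivisors R]
    {x y u v : R} (hadd : u + v = x + y) (hmul : u * v = x * y) : u = x ∨ u = y := by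
  have h : (u - x) * (u - y) = 0 := by linear_combination u * hadd - hmul
  rcases mul_eq_zero.mp h with h | h
  exacts [.inl (sub_eq_zero.mp h), .inr (sub_eq_zero.mp h)]

theorem dense_setOf_zsmul_div_two_pow {s : ℝ} (hs : 0 < s) :
    Dense {t : ℝ | ∃ (n : ℕ) (m : ℤ), m • (s / 2 ^ n) = t} := by
  refine dense_iff_exists_between.2 fun a b hab => ?_
  obtain ⟨n, hn⟩ := exists_nat_gt (s / (b - a))
  have hstep : s / 2 ^ n < b - a := by
    rw [div_lt_comm₀ (by positivity) (sub_pos.2 hab)]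
    exact hn.trans (by exact_mod_cast n.lt_two_pow_self)
  set h := s / 2 ^ n
  have hh : 0 < h := by positivity
  refine ⟨(⌊a / h⌋ + 1) • h, ⟨n, _, rfl⟩, ?_, ?_⟩ <;> rw [zsmul_eq_mul]
  · exact (div_lt_iff₀ hh).1 (by exact_mod_cast Int.lt_floor_add_one (a / h))
  · have := (le_div_iff₀ hh).1 (Int.floor_le (a / h))
    push_cast
    linarith

theorem IsCompact.exists_mapClusterPt_of_mapClusterPt_comp {X Y Z : Type*} [TopologicalSpace Y]
    [TopologicalSpace Z] [T2Space Z] {l : Filter X} {f : X → Y} {g : Y → Z} {K : Set Y} {z : Z}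
    (hK : IsCompact K) (hfK : ∀ᶠ x in l, f x ∈ K) (hg : Continuous g)
    (hz : MapClusterPt z l (g ∘ f)) : ∃ y, MapClusterPt y l f ∧ g y = z := by
  set l' := l ⊓ comap (g ∘ f) (𝓝 z)
  have : l'.NeBot := by
    rw [← map_neBot_iff (g ∘ f), Filter.push_pull, inf_comm]
    exact hz.clusterPt.neBot
  obtain ⟨y, -, hy⟩ :=
    hK.exists_mapClusterPt (f := l') (le_principal_iff.2 (hfK.filter_mono inf_le_left))
  refine ⟨y, hy.mono inf_le_left, eq_of_nhds_neBot ?_⟩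
  exact (hy.continuousAt_comp hg.continuousAt).clusterPt.neBot.mono
    (inf_le_inf_left _ (tendsto_comap.mono_left inf_le_right))

theorem eventually_nhds_norm_sub_lt_of_limsup_lt {X E : Type*} [TopologicalSpace X]
    [SeminormedAddCommGroup E] {f : X → E} {x : X} {y : E} (hx : f x = y) {r : ℝ}
    (h : limsup (fun t => (‖f t - y‖₊ : ℝ≥0∞)) (𝓝[≠] x) < ENNReal.ofReal r) :
    ∀ᶠ t in 𝓝 x, ‖f t - y‖ < r := by
  have hr : 0 < r := ENNReal.ofReal_pos.1 (pos_of_gt h)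
  rw [← nhdsNE_sup_pure, eventually_sup, eventually_pure, hx, sub_self, norm_zero]
  refine ⟨(eventually_lt_of_limsup_lt h).mono fun t ht => ?_, hr⟩
  rwa [← ENNReal.ofReal_coe_nnreal, coe_nnnorm, ENNReal.ofReal_lt_ofReal_iff hr] at ht

theorem Filter.Tendsto.limsup_nnnorm_sub_eq_zero {X E : Type*} [SeminormedAddCommGroup E]
    {l : Filter X} [l.NeBot] {f : X → E} {y : E} (h : Tendsto f l (𝓝 y)) :
    limsup (fun t => (‖f t - y‖₊ : ℝ≥0∞)) l = 0 := by
  simpa using (ENNReal.tendsto_coe.2 (h.sub_const y).nnnorm).limsup_eq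

theorem Complex.abs_im_le_norm_cos (z : ℂ) : |z.im| ≤ ‖cos z‖ := by
  have key : |‖exp (-z * I)‖ - ‖exp (z * I)‖| ≤ ‖2 * cos z‖ := by
    simpa [two_cos, add_comm] using abs_norm_sub_norm_le (exp (-z * I)) (-exp (z * I))
  simp only [norm_exp, neg_mul, neg_re, mul_re, I_re, I_im, mul_zero, mul_one, zero_sub, neg_neg,
    norm_mul, Complex.norm_ofNat] at key
  have hsinh : |Real.sinh z.im| ≤ ‖cos z‖ := by
    rw [Real.sinh_eq, abs_div, abs_two]; linarith
  rw [Real.abs_sinh] at hsinh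
  exact (Real.self_le_sinh_iff.2 (abs_nonneg _)).trans hsinh

theorem Complex.cos_image_ball_mem_nhds_one {r : ℝ} (hr : 0 < r) :
    cos '' Metric.ball 0 r ∈ 𝓝 1 := by
  rcases analyticAt_cos.eventually_constant_or_nhds_le_map_nhds (z₀ := (0 : ℂ)) with h | h
  · have := analyticOnNhd_cos.eqOn_of_preconnected_of_eventuallyEq analyticOnNhd_const
      isPreconnected_univ (Set.mem_univ 0) h (Set.mem_univ (π : ℂ))
    norm_num at this
  · rw [← cos_zero]
    exact h (image_mem_map (Metric.ball_mem_nhds 0 hr))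

theorem Complex.cos_eq_cos_div_two_of_cos_two_mul_eq {w z : ℂ} (h : cos (2 * w) = cos z)
    (hw : ‖w‖ < 1) (hz : ‖z‖ < 1) : cos w = cos (z / 2) := by
  have hk0 : ∀ k : ℤ, ‖(2 * k * π : ℂ)‖ ≤ ‖z‖ + ‖2 * w‖ → k = 0 := by
    intro k hk
    simp only [norm_mul, Complex.norm_intCast, norm_real, Real.norm_of_nonneg Real.pi_pos.le,
      Complex.norm_ofNat] at hk
    have : |(k : ℝ)| < 1 := by nlinarith [Real.pi_gt_three, abs_nonneg (k : ℝ)]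
    exact Int.abs_lt_one_iff.1 (by exact_mod_cast this)
  obtain ⟨k, hk | hk⟩ := cos_eq_cos_iff.1 h
  · obtain rfl := hk0 k ((congrArg norm (eq_sub_of_add_eq hk.symm)).trans_le (norm_sub_le _ _))
    rw [hk]; simp
  · obtain rfl := hk0 k ((congrArg norm (eq_add_of_sub_eq hk.symm)).trans_le (norm_add_le _ _))
    rw [hk]; simp [neg_div]

structure IsCosineFamily {G R : Type*} [AddCommGroup G] [CommRing R] (c : G → R) : Prop where
  map_zero : c 0 = 1
  map_add_add_map_sub : ∀ s t, c (t + s) + c (t - s) = 2 * (c t * c s)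

namespace IsCosineFamily

section Algebra

variable {G R : Type*} [AddCommGroup G] [CommRing R] {c : G → R} (hc : IsCosineFamily c)
include hc

theorem map_neg (t : G) : c (-t) = c t := by
  have h := hc.map_add_add_map_sub t 0
  rw [zero_add, zero_sub, hc.map_zero] at h
  linear_combination h

theorem map_add_self (t : G) : c (t + t) = 2 * c t ^ 2 - 1 := by
  have h := hc.map_add_add_map_sub t t
  rw [sub_self, hc.map_zero] at h
  linear_combination h

theorem map_zsmul (n : ℤ) (t : G) : c (n • t) = (T R n).eval (c t) := by
  induction n using Polynomial.Chebyshev.induct' with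
  | zero => simp [hc.map_zero]
  | one => simp
  | add_two n h₁ h₀ =>
    have h := hc.map_add_add_map_sub t (((n : ℤ) + 1) • t)
    rw [show ((n : ℤ) + 1) • t + t = ((n : ℤ) + 2) • t by module,
      show ((n : ℤ) + 1) • t - t = (n : ℤ) • t by module, h₁, h₀] at h
    simp only [T_add_two, Polynomial.eval_sub, Polynomial.eval_mul, Polynomial.eval_X,
      Polynomial.eval_ofNat]
    linear_combination h
  | neg n h => rw [neg_zsmul, hc.map_neg, h, T_neg]

theorem map_add_mul_map_sub [NoZeroDivisors R] [NeZero (2 : R)] (s t : G) :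
    c (t + s) * c (t - s) = c t ^ 2 + c s ^ 2 - 1 := by
  have h := hc.map_add_add_map_sub (t - s) (t + s)
  rw [add_add_sub_cancel, add_sub_sub_cancel, hc.map_add_self, hc.map_add_self] at h
  refine mul_left_cancel₀ (two_ne_zero' R) ?_
  linear_combination -h

theorem map_add_sub_map_sub_sq [NoZeroDivisors R] [NeZero (2 : R)] (s t : G) :
    (c (t + s) - c (t - s)) ^ 2 = 4 * (c t ^ 2 - 1) * (c s ^ 2 - 1) := by
  linear_combination (c (t + s) + c (t - s) + 2 * (c t * c s)) * hc.map_add_add_map_sub s t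
    - 4 * hc.map_add_mul_map_sub s t

end Algebra

theorem comp {G H R : Type*} [AddCommGroup G] [AddCommGroup H] [CommRing R] {c : G → R}
    (hc : IsCosineFamily c) (φ : H →+ G) : IsCosineFamily (c ∘ φ) :=
  ⟨by simpa using hc.map_zero, fun s t => by simpa using hc.map_add_add_map_sub (φ s) (φ t)⟩

theorem eq_of_forall_eq_div_two_pow {R : Type*} [CommRing R] [TopologicalSpace R] [T2Space R]
    {c d : ℝ → R} (hc : IsCosineFamily c) (hd : IsCosineFamily d) (hcc : Continuous c)
    (hdc : Continuous d) {s : ℝ} (hs : 0 < s) (h : ∀ n : ℕ, c (s / 2 ^ n) = d (s / 2 ^ n)) :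
    c = d :=
  hcc.ext_on (dense_setOf_zsmul_div_two_pow hs) hdc <| by
    rintro _ ⟨n, m, rfl⟩
    rw [hc.map_zsmul, hd.map_zsmul, h]

theorem _root_.Complex.isCosineFamily_cos : IsCosineFamily cos :=
  ⟨cos_zero, fun s t => by rw [cos_add, cos_sub]; ring⟩

variable {c : ℝ → ℂ} (hc : IsCosineFamily c)
include hc

theorem continuous_of_tendsto (h : Tendsto c (𝓝 0) (𝓝 1)) : Continuous c := by
  refine continuous_iff_continuousAt.2 fun x => ?_
  rw [ContinuousAt, ← map_add_left_nhds_zero, tendsto_map'_iff]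
  have hsum : Tendsto (fun s => c (x + s) + c (x - s)) (𝓝 0) (𝓝 (2 * c x)) := by
    simpa [hc.map_add_add_map_sub] using (h.const_mul (c x)).const_mul 2
  have hdiff_sq : Tendsto (fun s => (c (x + s) - c (x - s)) ^ 2) (𝓝 0) (𝓝 0) := by
    simp_rw [hc.map_add_sub_map_sub_sq]
    simpa using ((h.pow 2).sub_const 1).const_mul (4 * (c x ^ 2 - 1))
  have hdiff : Tendsto (fun s => c (x + s) - c (x - s)) (𝓝 0) (𝓝 0) := by
    rw [tendsto_zero_iff_norm_tendsto_zero]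
    simpa using hdiff_sq.norm.sqrt
  simpa [Function.comp_def] using (hsum.add hdiff).div_const 2

theorem exists_eq_cos_mul (h : Tendsto c (𝓝 0) (𝓝 1)) : ∃ a : ℂ, ∀ t, c t = cos (a * t) := by
  obtain ⟨δ, hδ, hball⟩ :=
    Metric.eventually_nhds_iff.1 (h.eventually (cos_image_ball_mem_nhds_one one_pos))
  set s := δ / 2
  have hs : 0 < s := half_pos hδ
  choose z hz hcz using fun n : ℕ => @hball (s / 2 ^ n) (by
    rw [Real.dist_0_eq_abs, abs_of_pos (by positivity)]
    exact (div_le_self hs.le (one_le_pow₀ one_le_two)).trans_lt (half_lt_self hδ))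
  have hcos : ∀ n : ℕ, cos (z 0 / 2 ^ n) = c (s / 2 ^ n) := by
    intro n
    induction n with
    | zero => simpa using hcz 0
    | succ n ih =>
      rw [← hcz, pow_succ, ← div_div]
      refine (cos_eq_cos_div_two_of_cos_two_mul_eq ?_ (mem_ball_zero_iff.1 (hz _)) ?_).symm
      · rw [ih, two_mul, Complex.isCosineFamily_cos.map_add_self, hcz, ← hc.map_add_self, pow_succ,
          ← div_div, add_halves]
      · rw [norm_div, norm_pow, Complex.norm_ofNat]
        exact (div_le_self (norm_nonneg _) (one_le_pow₀ one_le_two)).trans_lt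
          (mem_ball_zero_iff.1 (hz 0))
  refine ⟨z 0 / s, congrFun (eq_of_forall_eq_div_two_pow hc
    (Complex.isCosineFamily_cos.comp ((AddMonoidHom.mulLeft _).comp ofRealHom.toAddMonoidHom))
    (hc.continuous_of_tendsto h) (by fun_prop) hs fun n => ?_)⟩
  rw [← hcos]
  have : (s : ℂ) ≠ 0 := ofReal_ne_zero.2 hs.ne'
  congr 1
  push_cast
  field_simp

theorem norm_sq_le (t : ℝ) : ‖c t‖ ^ 2 ≤ (‖c (2 * t)‖ + 1) / 2 := by
  have h : 2 * c t ^ 2 = c (2 * t) + 1 := by rw [two_mul t, hc.map_add_self]; ring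
  have := congrArg norm h
  rw [norm_mul, norm_pow, Complex.norm_ofNat] at this
  linarith [norm_add_le (c (2 * t)) 1, norm_one (α := ℂ)]

theorem eventually_norm_le_one_add_half {m : ℝ} (hm : 0 ≤ m)
    (h : ∀ᶠ t in 𝓝 0, ‖c t‖ ≤ 1 + m) : ∀ᶠ t in 𝓝 0, ‖c t‖ ≤ 1 + m / 2 := by
  have h2 : Tendsto (fun t : ℝ => 2 * t) (𝓝 0) (𝓝 0) := by
    simpa using (continuous_const_mul (2 : ℝ)).tendsto 0
  filter_upwards [h2.eventually h] with t ht
  nlinarith [hc.norm_sq_le t, norm_nonneg (c t)]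

theorem eventually_norm_le_one_add {M : ℝ} (h : ∀ᶠ t in 𝓝 0, ‖c t‖ ≤ M) {ε : ℝ} (hε : 0 < ε) :
    ∀ᶠ t in 𝓝 0, ‖c t‖ ≤ 1 + ε := by
  have hpow : ∀ n : ℕ, ∀ᶠ t in 𝓝 0, ‖c t‖ ≤ 1 + |M| / 2 ^ n := by
    intro n
    induction n with
    | zero => exact h.mono fun t ht => by linarith [le_abs_self M]
    | succ n ih =>
      simpa [pow_succ, div_div] using hc.eventually_norm_le_one_add_half (by positivity) ih
  obtain ⟨n, hn⟩ := exists_nat_gt (|M| / ε)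
  refine (hpow n).mono fun t ht => ht.trans ?_
  rw [add_le_add_iff_left, div_le_iff₀ (by positivity)]
  rw [div_lt_iff₀ hε] at hn
  have : (n : ℝ) < 2 ^ n := by exact_mod_cast n.lt_two_pow_self
  nlinarith

theorem norm_le_one_of_mapClusterPt {M : ℝ} (hM : ∀ᶠ t in 𝓝 0, ‖c t‖ ≤ M) {p : ℂ}
    (hp : MapClusterPt p (𝓝 0) c) : ‖p‖ ≤ 1 :=
  le_of_forall_pos_le_add fun ε hε => by
    simpa using Metric.isClosed_closedBall.mem_of_mapClusterPt hp
      ((hc.eventually_norm_le_one_add hM hε).mono fun t ht => mem_closedBall_zero_iff.2 ht)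

theorem mapClusterPt_one : MapClusterPt 1 (𝓝 0) c :=
  hc.map_zero ▸ (tendsto_pure_nhds c 0).mapClusterPt.mono (pure_le_nhds 0)

theorem mapClusterPt_eval_T {p : ℂ} (hp : MapClusterPt p (𝓝 0) c) (n : ℤ) :
    MapClusterPt ((T ℂ n).eval p) (𝓝 0) c := by
  refine MapClusterPt.of_comp (φ := fun t : ℝ => n • t) (p := 𝓝 0) ?_ ?_
  · simpa using (continuous_const_smul n).tendsto (0 : ℝ)
  · convert hp.continuousAt_comp (T ℂ n).continuous.continuousAt using 1
    exact funext fun t => hc.map_zsmul n t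

theorem exists_cos_ofReal_eq_of_mapClusterPt {M : ℝ} (hM : ∀ᶠ t in 𝓝 0, ‖c t‖ ≤ M) {p : ℂ}
    (hp : MapClusterPt p (𝓝 0) c) : ∃ θ : ℝ, cos θ = p := by
  obtain ⟨ζ, rfl⟩ := cos_surjective p
  suffices ζ.im = 0 from ⟨ζ.re, congrArg cos (Complex.ext (by simp) (by simp [this]))⟩
  by_contra him
  have him_pos : 0 < |ζ.im| := abs_pos.2 him
  obtain ⟨n, hn⟩ := exists_nat_gt (1 / |ζ.im|)
  have hbound : ‖cos (n * ζ)‖ ≤ 1 := by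
    simpa [T_complex_cos] using hc.norm_le_one_of_mapClusterPt hM (hc.mapClusterPt_eval_T hp n)
  have := (abs_im_le_norm_cos (n * ζ)).trans hbound
  rw [div_lt_iff₀ him_pos] at hn
  simp [abs_mul] at this
  linarith

section Compact

variable {K : Set ℂ} (hK : IsCompact K) (hcK : ∀ᶠ t in 𝓝 0, c t ∈ K)
include hK hcK

theorem exists_mapClusterPt_eval_T_eq {p : ℂ} (hp : MapClusterPt p (𝓝 0) c) {n : ℤ} (hn : n ≠ 0) :
    ∃ u, MapClusterPt u (𝓝 0) c ∧ (T ℂ n).eval u = p := by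
  have hφ : Tendsto (fun t : ℝ => (n : ℝ)⁻¹ * t) (𝓝 0) (𝓝 0) := by
    simpa using (continuous_const_mul (n : ℝ)⁻¹).tendsto 0
  have hcomp : (fun u => (T ℂ n).eval u) ∘ (c ∘ fun t => (n : ℝ)⁻¹ * t) = c := by
    ext t
    rw [Function.comp_apply, Function.comp_apply, ← hc.map_zsmul, zsmul_eq_mul,
      mul_inv_cancel_left₀ (Int.cast_ne_zero.2 hn)]
  obtain ⟨u, hu, rfl⟩ := hK.exists_mapClusterPt_of_mapClusterPt_comp (hφ.eventually hcK)
    (T ℂ n).continuous (hcomp.symm ▸ hp)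
  exact ⟨u, hu.of_comp hφ, rfl⟩

theorem exists_mapClusterPt_add_eq_mul_eq {p q : ℂ} (hp : MapClusterPt p (𝓝 0) c)
    (hq : MapClusterPt q (𝓝 0) c) :
    ∃ x y, MapClusterPt x (𝓝 0) c ∧ MapClusterPt y (𝓝 0) c ∧
      x + y = 2 * (p * q) ∧ x * y = p ^ 2 + q ^ 2 - 1 := by
  have hadd : Tendsto (fun ts : ℝ × ℝ => ts.1 + ts.2) (𝓝 0 ×ˢ 𝓝 0) (𝓝 0) := by
    simpa [← nhds_prod_eq] using continuous_add.tendsto ((0, 0) : ℝ × ℝ)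
  have hsub : Tendsto (fun ts : ℝ × ℝ => ts.1 - ts.2) (𝓝 0 ×ˢ 𝓝 0) (𝓝 0) := by
    simpa [← nhds_prod_eq] using continuous_sub.tendsto ((0, 0) : ℝ × ℝ)
  have hpq := (hp.prodMap hq).continuousAt_comp
    (f := fun pq : ℂ × ℂ => (2 * (pq.1 * pq.2), pq.1 ^ 2 + pq.2 ^ 2 - 1)) (by fun_prop)
  obtain ⟨⟨x, y⟩, hxy, hsum⟩ := (hK.prod hK).exists_mapClusterPt_of_mapClusterPt_comp
    (f := fun ts : ℝ × ℝ => (c (ts.1 + ts.2), c (ts.1 - ts.2)))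
    (g := fun xy : ℂ × ℂ => (xy.1 + xy.2, xy.1 * xy.2))
    ((hadd.eventually hcK).and (hsub.eventually hcK)) (by fun_prop) (by
      convert hpq using 1
      ext ts <;> simp [hc.map_add_add_map_sub, hc.map_add_mul_map_sub])
  simp only [Prod.mk.injEq] at hsum
  exact ⟨x, y, (hxy.continuousAt_comp continuous_fst.continuousAt).of_comp hadd,
    (hxy.continuousAt_comp continuous_snd.continuousAt).of_comp hsub, hsum.1, hsum.2⟩

theorem mapClusterPt_cos_add {a b : ℂ} (ha : MapClusterPt (cos a) (𝓝 0) c)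
    (hb : MapClusterPt (cos b) (𝓝 0) c) : MapClusterPt (cos (a + b)) (𝓝 0) c := by
  obtain ⟨x, y, hx, hy, hadd, hmul⟩ := hc.exists_mapClusterPt_add_eq_mul_eq hK hcK ha hb
  rcases eq_or_eq_of_add_eq_add_of_mul_eq_mul
      ((Complex.isCosineFamily_cos.map_add_add_map_sub b a).trans hadd.symm)
      ((Complex.isCosineFamily_cos.map_add_mul_map_sub b a).trans hmul.symm) with h | h <;>
    rwa [h]

end Compact

theorem eq_one_of_mapClusterPt {l : ℝ} (hl : l < 2) (hcl : ∀ᶠ t in 𝓝 0, ‖c t - 1‖ ≤ l) {p : ℂ}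
    (hp : MapClusterPt p (𝓝 0) c) : p = 1 := by
  have hK : IsCompact (Metric.closedBall (1 : ℂ) l) := isCompact_closedBall 1 l
  have hcK : ∀ᶠ t in 𝓝 0, c t ∈ Metric.closedBall (1 : ℂ) l := by simpa [dist_eq_norm] using hcl
  have hM : ∀ᶠ t in 𝓝 0, ‖c t‖ ≤ 1 + l :=
    hcl.mono fun t ht => by linarith [norm_sub_norm_le (c t) 1, norm_one (α := ℂ)]
  let A : AddSubgroup ℝ :=
    { carrier := {θ | MapClusterPt (cos θ) (𝓝 0) c}
      zero_mem' := by simpa using hc.mapClusterPt_one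
      add_mem' := fun {a b} ha hb => by simpa using hc.mapClusterPt_cos_add hK hcK ha hb
      neg_mem' := fun {a} ha => by simpa using ha }
  have hA : ∀ θ ∈ A, cos θ ∈ Metric.closedBall (1 : ℂ) l := fun θ hθ =>
    Metric.isClosed_closedBall.mem_of_mapClusterPt hθ hcK
  rcases A.dense_or_cyclic with hdense | ⟨g, hg⟩
  · have hπ : π ∈ closure (A : Set ℝ) := hdense.closure_eq ▸ Set.mem_univ π
    have : cos π ∈ Metric.closedBall (1 : ℂ) l :=
      closure_minimal hA (Metric.isClosed_closedBall.preimage (by fun_prop)) hπ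
    norm_num [dist_eq_norm] at this
    linarith
  · have h2π : 2 * π ∈ A := by
      show MapClusterPt _ _ _
      simpa using hc.mapClusterPt_one
    rw [hg, AddSubgroup.mem_closure_singleton] at h2π
    obtain ⟨m, hm⟩ := h2π
    have hm0 : m ≠ 0 := by rintro rfl; simp [Real.pi_ne_zero] at hm
    obtain ⟨u, hu, rfl⟩ := hc.exists_mapClusterPt_eval_T_eq hK hcK hp hm0
    obtain ⟨ψ, rfl⟩ := hc.exists_cos_ofReal_eq_of_mapClusterPt hM hu
    have hψ : ψ ∈ A := hu
    rw [hg, AddSubgroup.mem_closure_singleton] at hψ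
    obtain ⟨j, rfl⟩ := hψ
    rw [T_complex_cos, ← cos_int_mul_two_pi j, ← ofReal_ofNat, ← ofReal_mul, ← hm]
    push_cast [zsmul_eq_mul]
    ring_nf

theorem tendsto_one_of_eventually_norm_sub_one_le {l : ℝ} (hl : l < 2)
    (hcl : ∀ᶠ t in 𝓝 0, ‖c t - 1‖ ≤ l) : Tendsto c (𝓝 0) (𝓝 1) :=
  (isCompact_closedBall (1 : ℂ) l).tendsto_nhds_of_unique_mapClusterPt
    (by simpa [dist_eq_norm] using hcl) fun _ _ hp => hc.eq_one_of_mapClusterPt hl hcl hp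

theorem tendsto_one_of_limsup_lt_two
    (h : limsup (fun t => (‖c t - 1‖₊ : ℝ≥0∞)) (𝓝[≠] 0) < 2) : Tendsto c (𝓝 0) (𝓝 1) := by
  obtain ⟨l, -, hlt, hl2⟩ := ENNReal.lt_iff_exists_real_btwn.1 h
  refine hc.tendsto_one_of_eventually_norm_sub_one_le ?_
    ((eventually_nhds_norm_sub_lt_of_limsup_lt hc.map_zero hlt).mono fun _ => le_of_lt)
  by_contra! hl
  exact hl2.not_ge (by simpa using ENNReal.ofReal_le_ofReal hl)

theorem limsup_nnnorm_sub_one_le_two (h : limsup (fun t => (‖c t - 1‖₊ : ℝ≥0∞)) (𝓝[≠] 0) ≠ ⊤) :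
    limsup (fun t => (‖c t - 1‖₊ : ℝ≥0∞)) (𝓝[≠] 0) ≤ 2 := by
  obtain ⟨r, -, hr, -⟩ := ENNReal.lt_iff_exists_real_btwn.1 (lt_top_iff_ne_top.2 h)
  have hM : ∀ᶠ t in 𝓝 0, ‖c t‖ ≤ 1 + r :=
    (eventually_nhds_norm_sub_lt_of_limsup_lt hc.map_zero hr).mono fun t ht => by
      linarith [norm_le_norm_sub_add (c t) 1, norm_one (α := ℂ)]
  refine ENNReal.le_of_forall_pos_le_add fun ε hε _ => limsup_le_of_le (by isBoundedDefault) ?_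
  filter_upwards [(hc.eventually_norm_le_one_add hM (NNReal.coe_pos.2 hε)).filter_mono
    nhdsWithin_le_nhds] with t ht
  have : ‖c t - 1‖ ≤ 2 + ε := by linarith [norm_sub_le (c t) 1, norm_one (α := ℂ)]
  exact_mod_cast (NNReal.coe_le_coe.1 (by simpa using this) : ‖c t - 1‖₊ ≤ 2 + ε)

end IsCosineFamily

/-- For a scalar cosine family `c : ℝ → ℂ`, the limit superior
`limsup_{t → 0} |c t - 1|` (in `ℝ≥0∞`, along the punctured neighborhood
filter of `0`) is `0`, `2`, or `∞`; moreover if it is `0` then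
`c t = cos (a t)` for some `a ∈ ℂ`. -/
theorem scalar_cosine_limsup_zero_trichotomy (c : ℝ → ℂ)
    (hc0 : c 0 = 1)
    (hc : ∀ s t : ℝ, c (t + s) + c (t - s) = 2 * (c t * c s)) :
    (Filter.limsup (fun t : ℝ => (‖c t - 1‖₊ : ℝ≥0∞)) (nhdsWithin 0 {0}ᶜ) = 0 ∨
      Filter.limsup (fun t : ℝ => (‖c t - 1‖₊ : ℝ≥0∞)) (nhdsWithin 0 {0}ᶜ) = 2 ∨
      Filter.limsup (fun t : ℝ => (‖c t - 1‖₊ : ℝ≥0∞)) (nhdsWithin 0 {0}ᶜ) = ⊤) ∧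
    (Filter.limsup (fun t : ℝ => (‖c t - 1‖₊ : ℝ≥0∞)) (nhdsWithin 0 {0}ᶜ) = 0 →
      ∃ a : ℂ, ∀ t : ℝ, c t = Complex.cos (a * t)) := by
  have hcos : IsCosineFamily c := ⟨hc0, hc⟩
  refine ⟨?_, fun h => hcos.exists_eq_cos_mul (hcos.tendsto_one_of_limsup_lt_two (by simp [h]))⟩
  rcases lt_or_ge (limsup (fun t : ℝ => (‖c t - 1‖₊ : ℝ≥0∞)) (𝓝[≠] 0)) 2 with h | h
  · exact .inl ((hcos.tendsto_one_of_limsup_lt_two h).mono_left nhdsWithin_le_nhds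
      |>.limsup_nnnorm_sub_eq_zero)
  by_cases htop : limsup (fun t : ℝ => (‖c t - 1‖₊ : ℝ≥0∞)) (𝓝[≠] 0) = ⊤
  · exact .inr (.inr htop)
  · exact .inr (.inl (le_antisymm (hcos.limsup_nnnorm_sub_one_le_two htop) h))
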